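/- Let π be a two-stack sortable permutation and suppose D(π) = (π1, π2). Then either π = C1(π1, π2), or π = C2(π1, π2, i) for some integer i with 1 ≤ i ≤ slmax(π2). -/

import Mathlib

/-!
Write `π = A · n · B` with `n` the largest entry, so that `S π = S A · S B · n`. Since
`S (S π)` is the identity, `S π` has no subsequence `b c a` with `a < b < c`: the second pass
of the stack would keep `b` before `a`.

If every entry of `A` lies below every entry of `B`, then `A` consists of `1, …, k`, `B` of
`k + 1, …, k + ℓ`, and `π = C1(π1, π2)`. Otherwise let `v` be the largest entry of `A`. As
`S A` ends with `v`, an entry `y ≠ v` of `A` above an entry `z` of `B` would give the pattern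
`y v z`; so `A = {1, …, k - 1, v}` and `v - 1 ∈ B`. Moreover `v - 1` is a left-to-right maximum
of `S B`, for a larger entry `u` before it would give the pattern `v u (v - 1)`. Standardizing,
`v - k` is a left-to-right maximum `a_i` of `S π2`, and `π = C2(π1, π2, i)`.
-/

namespace TSP

theorem foldr_max_mem {α : Type} [LinearOrder α] (x : α) (l : List α) :
    l.foldr max x ∈ x :: l := by
  induction l with
  | nil => simp
  | cons a t ih =>
    simp only [List.foldr_cons]
    rcases max_choice a (t.foldr max x) with h | h <;> rw [h]
    · simp
    · rcases List.mem_cons.mp ih with h' | h'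
      · rw [h']; simp
      · exact List.mem_cons.mpr (Or.inr (List.mem_cons.mpr (Or.inr h')))

theorem length_takeWhile_lt {α : Type} [DecidableEq α] {m : α} {l : List α}
    (h : m ∈ l) : (l.takeWhile (· ≠ m)).length < l.length := by
  have hd : l.dropWhile (· ≠ m) ≠ [] := by
    intro hnil
    have := List.dropWhile_eq_nil_iff.mp hnil m h
    simp at this
  have hsum : (l.takeWhile (· ≠ m)).length + (l.dropWhile (· ≠ m)).length = l.length := by
    rw [← List.length_append, List.takeWhile_append_dropWhile]
  have : 0 < (l.dropWhile (· ≠ m)).length := List.length_pos_iff.mpr hd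
  omega

theorem length_tail_dropWhile_lt {α : Type} [DecidableEq α] {m : α} {l : List α}
    (h : l ≠ []) : ((l.dropWhile (· ≠ m)).tail).length < l.length := by
  have hsum : (l.takeWhile (· ≠ m)).length + (l.dropWhile (· ≠ m)).length = l.length := by
    rw [← List.length_append, List.takeWhile_append_dropWhile]
  have h2 : ((l.dropWhile (· ≠ m)).tail).length = (l.dropWhile (· ≠ m)).length - 1 :=
    List.length_tail
  have : 0 < l.length := List.length_pos_iff.mpr h
  omega

/-- The stack-sorting operator `S`: `S(ε) = ε`, and if `A` is nonempty with
largest element `m` and `A = A_L · (m) · A_R`, then `S(A) = S(A_L) · S(A_R) · (m)`. -/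
def S {α : Type} [LinearOrder α] : List α → List α
  | [] => []
  | x :: l =>
    let m := l.foldr max x
    S ((x :: l).takeWhile (· ≠ m)) ++ S (((x :: l).dropWhile (· ≠ m)).tail) ++ [m]
termination_by l => l.length
decreasing_by
  · exact length_takeWhile_lt (by simpa [List.foldr_attach] using foldr_max_mem x l)
  · exact length_tail_dropWhile_lt (by simp)

/-- The identity permutation `id_n = (1, 2, …, n)` as a list. -/
def idPerm (n : ℕ) : List ℕ := List.range' 1 n

/-- `l` is a permutation of `{1, …, n}` (viewed as a sequence). -/
def IsPermOf (n : ℕ) (l : List ℕ) : Prop := l.Perm (idPerm n)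

/-- `l` is a two-stack sortable permutation (of `{1, …, len l}`). -/
def Is2SS (l : List ℕ) : Prop := IsPermOf l.length l ∧ S (S l) = idPerm l.length

/-- `σ^{+k}`: add `k` to every entry. -/
def shift (k : ℕ) (l : List ℕ) : List ℕ := l.map (· + k)

/-- `σ^{+(k1,m,k2)}`: add `k1` to every entry strictly smaller than `m`, `k2` to the others. -/
def shift3 (k1 m k2 : ℕ) (l : List ℕ) : List ℕ :=
  l.map (fun a => if a < m then a + k1 else a + k2)

/-- Standardization `P(A)`: the permutation of `{1,…,len A}` in the same relative order. -/
def stand (l : List ℕ) : List ℕ := l.map (fun a => (l.filter (fun b => b ≤ a)).length)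

/-- Avoidance of the pattern 231: no positions `i < j < k` with `l(k) < l(i) < l(j)`. -/
def Avoids231 (l : List ℕ) : Prop :=
  ¬ ∃ i j k, i < j ∧ j < k ∧ k < l.length ∧
      l.getD k 0 < l.getD i 0 ∧ l.getD i 0 < l.getD j 0

/-- The list of values of the left-to-right maxima of `l`, in order. -/
def lrMaxima (l : List ℕ) : List ℕ :=
  ((List.range l.length).filter
    (fun i => (l.take i).all (fun b => b < l.getD i 0))).map (fun i => l.getD i 0)

/-- `lmax`: the number of left-to-right maxima. -/
def lmax (l : List ℕ) : ℕ :=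
  (List.range l.length).countP (fun i => (l.take i).all (fun b => b < l.getD i 0))

/-- `rmax`: the number of right-to-left maxima. -/
def rmax (l : List ℕ) : ℕ :=
  (List.range l.length).countP (fun i => (l.drop (i+1)).all (fun b => b < l.getD i 0))

/-- `asc`: the number of ascents. -/
def asc (l : List ℕ) : ℕ :=
  (List.range (l.length - 1)).countP (fun i => l.getD i 0 < l.getD (i+1) 0)

/-- `des`: the number of descents. -/
def des (l : List ℕ) : ℕ :=
  (List.range (l.length - 1)).countP (fun i => l.getD (i+1) 0 < l.getD i 0)

/-- `slmax(π)`: the number of left-to-right maxima of `S(π)`. -/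
def slmax (l : List ℕ) : ℕ := lmax (S l)

/-- `sldes(π)`: the number of entries `a` that precede `a - 1` in `S(π)`. -/
def sldes (l : List ℕ) : ℕ :=
  (List.range (S l).length).countP
    (fun i => ((S l).drop (i+1)).any (fun b => b + 1 = (S l).getD i 0))

/-- The construction `C1(π1, π2) = π1 · (k+ℓ+1) · π2^{+k}`. -/
def C1 (p1 p2 : List ℕ) : List ℕ :=
  p1 ++ (p1.length + p2.length + 1) :: shift p1.length p2

/-- The `i`-th left-to-right maximum `a_i` of `S(π2)` (1-indexed). -/
def lrm (p2 : List ℕ) (i : ℕ) : ℕ := (lrMaxima (S p2)).getD (i - 1) 0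

/-- The construction `C2(π1, π2, i) = π1^{+(0,k,a_i)} · (k+ℓ+1) · π2^{+(k-1,a_i+1,k)}`. -/
def C2 (p1 p2 : List ℕ) (i : ℕ) : List ℕ :=
  shift3 0 p1.length (lrm p2 i) p1 ++
    (p1.length + p2.length + 1) :: shift3 (p1.length - 1) (lrm p2 i + 1) p1.length p2

/-- The decomposition `D(π) = (P(π_ℓ), P(π_r))`, where `π = π_ℓ · (n) · π_r`
with `n` the largest entry of `π`. -/
def D (l : List ℕ) : List ℕ × List ℕ :=
  match l with
  | [] => ([], [])
  | x :: t =>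
    let m := t.foldr max x
    (stand ((x :: t).takeWhile (· ≠ m)), stand (((x :: t).dropWhile (· ≠ m)).tail))


open scoped List

theorem le_foldr_max {α : Type} [LinearOrder α] (x : α) (l : List α) :
    ∀ y ∈ x :: l, y ≤ l.foldr max x := by
  induction l with
  | nil => simp
  | cons a t ih =>
    intro y hy
    rw [List.foldr_cons, le_max_iff]
    rcases List.mem_cons.mp hy with rfl | hy
    · exact Or.inr (ih y List.mem_cons_self)
    · rcases List.mem_cons.mp hy with rfl | hy
      · exact Or.inl le_rfl
      · exact Or.inr (ih y (List.mem_cons_of_mem _ hy))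

theorem foldr_max_eq {α : Type} [LinearOrder α] {x m : α} {l : List α}
    (hm : m ∈ x :: l) (hub : ∀ y ∈ x :: l, y ≤ m) : l.foldr max x = m :=
  le_antisymm (hub _ (foldr_max_mem x l)) (le_foldr_max x l m hm)

theorem S_cons {α : Type} [LinearOrder α] (x : α) (l : List α) :
    S (x :: l) = S ((x :: l).takeWhile (· ≠ l.foldr max x))
      ++ S (((x :: l).dropWhile (· ≠ l.foldr max x)).tail) ++ [l.foldr max x] := by
  rw [S]

theorem takeWhile_append_cons_tail_dropWhile {α : Type} [DecidableEq α] {m : α} {l : List α}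
    (hm : m ∈ l) : l.takeWhile (· ≠ m) ++ m :: (l.dropWhile (· ≠ m)).tail = l := by
  induction l with
  | nil => simp at hm
  | cons x t ih =>
    by_cases hx : x = m
    · simp [hx]
    · have ht := ih ((List.mem_cons.mp hm).resolve_left (Ne.symm hx))
      simp only [List.takeWhile_cons, List.dropWhile_cons, ne_eq, hx, not_false_eq_true,
        decide_true, if_true, List.cons_append, ht]

theorem exists_S_cons_eq {α : Type} [LinearOrder α] (x : α) (t : List α) :
    ∃ T m R, x :: t = T ++ m :: R ∧ (∀ y ∈ x :: t, y ≤ m) ∧ S (x :: t) = S T ++ S R ++ [m] :=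
  ⟨_, _, _, (takeWhile_append_cons_tail_dropWhile (foldr_max_mem x t)).symm,
    le_foldr_max x t, S_cons x t⟩

theorem S_perm {α : Type} [LinearOrder α] (l : List α) : S l ~ l := by
  match l with
  | [] => simp [S]
  | x :: t =>
    obtain ⟨T, m, R, hl, -, hS⟩ := exists_S_cons_eq x t
    rw [hS, hl]
    calc S T ++ S R ++ [m] ~ T ++ R ++ [m] := ((S_perm T).append (S_perm R)).append (.refl _)
      _ ~ m :: (T ++ R) := List.perm_append_singleton _ _
      _ ~ T ++ m :: R := List.perm_middle.symm
termination_by l.length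
decreasing_by all_goals (simp only [hl, List.length_append, List.length_cons]; omega)

theorem S_mem {α : Type} [LinearOrder α] {l : List α} {a : α} : a ∈ S l ↔ a ∈ l :=
  (S_perm l).mem_iff

theorem split_append_cons_of_forall_lt {α : Type} [LinearOrder α] {A B : List α} {m : α}
    (h : ∀ y ∈ A ++ B, y < m) {x : α} {t : List α} (hxt : A ++ m :: B = x :: t) :
    t.foldr max x = m ∧ (x :: t).takeWhile (· ≠ m) = A ∧
      ((x :: t).dropWhile (· ≠ m)).tail = B := by
  have hA : ∀ y ∈ A, (y ≠ m : Bool) = true := fun y hy => by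
    simpa using (h y (List.mem_append_left B hy)).ne
  refine ⟨foldr_max_eq (hxt ▸ by simp) (hxt ▸ fun y hy => ?_), ?_, ?_⟩
  · rcases List.mem_append.mp hy with hy | hy
    · exact (h y (List.mem_append_left B hy)).le
    · rcases List.mem_cons.mp hy with rfl | hy
      · exact le_rfl
      · exact (h y (List.mem_append_right A hy)).le
  · rw [← hxt, List.takeWhile_append_of_pos hA]; simp
  · rw [← hxt, List.dropWhile_append_of_pos hA]; simp

theorem S_append_cons {α : Type} [LinearOrder α] {A B : List α} {m : α}
    (h : ∀ y ∈ A ++ B, y < m) : S (A ++ m :: B) = S A ++ S B ++ [m] := by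
  obtain ⟨x, t, hxt⟩ := List.exists_cons_of_ne_nil (l := A ++ m :: B) (by simp)
  obtain ⟨hmax, hT, hR⟩ := split_append_cons_of_forall_lt h hxt
  rw [hxt, S_cons, hmax, hT, hR]

theorem D_append_cons {A B : List ℕ} {m : ℕ} (h : ∀ y ∈ A ++ B, y < m) :
    D (A ++ m :: B) = (stand A, stand B) := by
  obtain ⟨x, t, hxt⟩ := List.exists_cons_of_ne_nil (l := A ++ m :: B) (by simp)
  obtain ⟨hmax, hT, hR⟩ := split_append_cons_of_forall_lt h hxt
  rw [hxt, D]
  simp only [hmax, hT, hR]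

theorem exists_eq_append_cons_of_forall_le {α : Type} [LinearOrder α] {l : List α} {m : α}
    (hl : l.Nodup) (hm : m ∈ l) (hle : ∀ y ∈ l, y ≤ m) :
    ∃ A B, l = A ++ m :: B ∧ ∀ y ∈ A ++ B, y < m := by
  obtain ⟨A, B, rfl⟩ := List.append_of_mem hm
  have hmAB : m ∉ A ++ B := (List.nodup_cons.mp (List.nodup_middle.mp hl)).1
  refine ⟨A, B, rfl, fun y hy => lt_of_le_of_ne (hle y ?_) (fun h => hmAB (h ▸ hy))⟩
  exact List.perm_middle.symm.subset (List.mem_cons_of_mem m hy)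

theorem foldr_max_map {α β : Type} [LinearOrder α] [LinearOrder β] {f : α → β}
    (hf : Monotone f) (x : α) (l : List α) :
    (l.map f).foldr max (f x) = f (l.foldr max x) := by
  induction l with
  | nil => simp
  | cons a t ih => simp [ih, hf.map_max]

theorem S_map {α β : Type} [LinearOrder α] [LinearOrder β] {f : α → β} (hf : StrictMono f)
    (l : List α) : S (l.map f) = (S l).map f := by
  match l with
  | [] => simp [S]
  | x :: t =>
    have hmem : t.foldr max x ∈ x :: t := foldr_max_mem x t
    set m := t.foldr max x
    have hpred : (fun y => decide (y ≠ f m)) ∘ f = fun y => decide (y ≠ m) := by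
      funext y
      simp [hf.injective.eq_iff]
    rw [List.map_cons, S_cons, ← List.map_cons, foldr_max_map hf.monotone, List.takeWhile_map,
      List.dropWhile_map, hpred, ← List.map_tail, S_map hf, S_map hf, S_cons]
    simp [m]
termination_by l.length
decreasing_by
  · exact length_takeWhile_lt hmem
  · exact length_tail_dropWhile_lt (by simp)

theorem triple_sublist_append {α : Type} {x y z : α} {T R : List α}
    (h : [x, y, z] <+ T ++ R) :
    [x, y, z] <+ T ∨ [x, y, z] <+ R ∨ x ∈ T ∧ z ∈ R := by
  obtain ⟨l₁, l₂, heq, h₁, h₂⟩ := List.sublist_append_iff.mp h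
  rcases l₁ with _ | ⟨a, _ | ⟨b, _ | ⟨c, _ | ⟨d, l₁⟩⟩⟩⟩
  · simp only [List.nil_append] at heq
    exact Or.inr (Or.inl (heq ▸ h₂))
  · obtain ⟨rfl, rfl⟩ : x = a ∧ [y, z] = l₂ := by simpa using heq
    exact Or.inr (Or.inr ⟨h₁.subset (by simp), h₂.subset (by simp)⟩)
  · obtain ⟨rfl, rfl, rfl⟩ : x = a ∧ y = b ∧ [z] = l₂ := by simpa using heq
    exact Or.inr (Or.inr ⟨h₁.subset (by simp), h₂.subset (by simp)⟩)
  · obtain ⟨rfl, rfl, rfl, rfl⟩ : x = a ∧ y = b ∧ z = c ∧ l₂ = [] := by simpa using heq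
    exact Or.inl h₁
  · simp at heq

theorem pair_sublist_S_of_231 {α : Type} [LinearOrder α] {l : List α} {a b c : α}
    (hsub : [b, c, a] <+ l)
    (hab : a < b) (hbc : b < c) : [b, a] <+ S l := by
  match l with
  | [] => simp at hsub
  | x :: t =>
    obtain ⟨T, m, R, hl, hle, hS⟩ := exists_S_cons_eq x t
    rw [hl] at hsub hle
    rw [hS]
    rcases triple_sublist_append hsub with hT | hmR | ⟨hbT, haR⟩
    · exact ((pair_sublist_S_of_231 hT hab hbc).trans (List.sublist_append_left _ _)).trans
        (List.sublist_append_left _ _)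
    · rcases List.sublist_cons_iff.mp hmR with hR | ⟨r, hr, hrR⟩
      · exact ((pair_sublist_S_of_231 hR hab hbc).trans (List.sublist_append_right _ _)).trans
          (List.sublist_append_left _ _)
      · obtain ⟨rfl, rfl⟩ : b = m ∧ [c, a] = r := by simpa using hr
        exact absurd (hle c (by simp [hrR.subset List.mem_cons_self])) (not_le.mpr hbc)
    · rcases List.mem_cons.mp haR with rfl | haR
      · exact absurd (hle b (by simp [hbT])) (not_le.mpr hab)
      · exact ((List.singleton_sublist.mpr (S_mem.mpr hbT)).append
          (List.singleton_sublist.mpr (S_mem.mpr haR))).trans (List.sublist_append_left _ _)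
termination_by l.length
decreasing_by all_goals (simp only [hl, List.length_append, List.length_cons]; omega)

theorem lrMaxima_map {f : ℕ → ℕ} (hf : StrictMono f) (l : List ℕ) :
    lrMaxima (l.map f) = (lrMaxima l).map f := by
  have hget : ∀ i < l.length, (l.map f).getD i 0 = f (l.getD i 0) := fun i hi => by
    rw [List.getD_eq_getElem _ _ (by simpa using hi), List.getD_eq_getElem _ _ hi]
    simp
  unfold lrMaxima
  rw [List.length_map, List.map_map]
  have hfilter : (List.range l.length).filter
      (fun i => ((l.map f).take i).all (fun b => b < (l.map f).getD i 0)) =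
      (List.range l.length).filter (fun i => (l.take i).all (fun b => b < l.getD i 0)) := by
    refine List.filter_congr fun i hi => ?_
    rw [hget i (List.mem_range.mp hi), ← List.map_take, List.all_map]
    simp [Function.comp_def, hf.lt_iff_lt]
  rw [hfilter]
  exact List.map_congr_left fun i hi =>
    hget i (List.mem_range.mp (List.mem_of_mem_filter hi))

theorem mem_lrMaxima_of_forall_lt {l : List ℕ} {w : ℕ} (hw : w ∈ l)
    (h : ∀ u, [u, w] <+ l → u < w) : w ∈ lrMaxima l := by
  obtain ⟨s, r, rfl⟩ := List.append_of_mem hw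
  have hq : (s ++ w :: r).getD s.length 0 = w := by simp
  refine List.mem_map.mpr ⟨s.length, List.mem_filter.mpr ⟨by simp, ?_⟩, hq⟩
  rw [hq, List.take_left' rfl, List.all_eq_true]
  exact fun u hu => decide_eq_true
    (h u ((List.singleton_sublist.mpr hu).append (List.singleton_sublist.mpr List.mem_cons_self)))

theorem exists_lrm_eq {p : List ℕ} {a : ℕ} (ha : a ∈ lrMaxima (S p)) :
    ∃ i, 1 ≤ i ∧ i ≤ slmax p ∧ lrm p i = a := by
  have hidx := List.idxOf_lt_length_iff.mpr ha
  refine ⟨(lrMaxima (S p)).idxOf a + 1, by omega, ?_, ?_⟩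
  · rw [slmax, lmax, List.countP_eq_length_filter,
      ← List.length_map (f := fun i => (S p).getD i 0)]
    exact hidx
  · rw [lrm, Nat.add_sub_cancel, List.getD_eq_getElem _ _ hidx, List.getElem_idxOf]

def rank (l : List ℕ) (y : ℕ) : ℕ := l.countP (· ≤ y)

theorem stand_eq_map_rank (l : List ℕ) : stand l = l.map (rank l) := by
  simp [stand, rank, List.countP_eq_length_filter]

theorem rank_cons (v : ℕ) (l : List ℕ) (y : ℕ) :
    rank (v :: l) y = rank l y + if v ≤ y then 1 else 0 := by
  simp [rank, List.countP_cons]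

theorem rank_perm {l₁ l₂ : List ℕ} (h : l₁ ~ l₂) (y : ℕ) : rank l₁ y = rank l₂ y :=
  h.countP_eq _

theorem rank_range' (N y : ℕ) : rank (List.range' 1 N) y = min y N := by
  induction N with
  | zero => simp [rank]
  | succ N ih =>
    rw [List.range'_concat, rank, List.countP_append, ← rank, ih]
    by_cases h : 1 + N ≤ y <;> simp [h] <;> omega

theorem rank_add_rank {A B : List ℕ} {N y : ℕ} (hp : A ++ B ~ List.range' 1 N)
    (hy : y ∈ A ++ B) : rank A y + rank B y = y := by
  have hyN := List.mem_range'_1.mp (hp.subset hy)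
  rw [rank, rank, ← List.countP_append, ← rank, rank_perm hp, rank_range']
  omega

theorem rank_of_forall_lt {l : List ℕ} {y : ℕ} (h : ∀ z ∈ l, y < z) : rank l y = 0 :=
  List.countP_eq_zero.mpr fun z hz => by simpa using h z hz

theorem rank_of_forall_le {l : List ℕ} {y : ℕ} (h : ∀ z ∈ l, z ≤ y) : rank l y = l.length :=
  List.countP_eq_length.mpr fun z hz => by simpa using h z hz

theorem rank_le_length (l : List ℕ) (y : ℕ) : rank l y ≤ l.length := List.countP_le_length

theorem stand_length (l : List ℕ) : (stand l).length = l.length := by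
  simp [stand]

theorem C1_stand_eq_of_forall_lt {A B : List ℕ}
    (hp : A ++ B ~ List.range' 1 (A.length + B.length)) (hAB : ∀ y ∈ A, ∀ z ∈ B, y < z) :
    C1 (stand A) (stand B) = A ++ (A.length + B.length + 1) :: B := by
  have hA : stand A = A := by
    rw [stand_eq_map_rank]
    refine (List.map_congr_left fun y hy => ?_).trans (List.map_id A)
    have := rank_add_rank hp (List.mem_append_left B hy)
    rw [rank_of_forall_lt (hAB y hy)] at this
    simpa using this
  have hB : shift A.length (stand B) = B := by
    rw [shift, stand_eq_map_rank, List.map_map]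
    refine (List.map_congr_left fun z hz => ?_).trans (List.map_id B)
    have := rank_add_rank hp (List.mem_append_right A hz)
    rw [rank_of_forall_le fun y hy => (hAB y hy z hz).le] at this
    simp only [Function.comp_apply, id]
    omega
  rw [C1, hA, hB, stand_length]

theorem le_of_perm_cons_of_forall_lt {A A₀ : List ℕ} {v : ℕ} (hA : A ~ v :: A₀)
    (hv : ∀ y ∈ A₀, y < v) : ∀ y ∈ A, y ≤ v := fun y hy => by
  rcases List.mem_cons.mp (hA.subset hy) with rfl | hy
  exacts [le_rfl, (hv y hy).le]

theorem shift3_stand_left {A A₀ B : List ℕ} {v N : ℕ} (hA : A ~ v :: A₀)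
    (hp : A ++ B ~ List.range' 1 N) (hv : ∀ y ∈ A₀, y < v)
    (hsep : ∀ y ∈ A₀, ∀ z ∈ B, y < z) :
    shift3 0 A.length (v - A.length) (stand A) = A := by
  have hk : A.length = A₀.length + 1 := by simp [hA.length_eq]
  rw [shift3, stand_eq_map_rank, List.map_map]
  refine (List.map_congr_left fun y hy => ?_).trans (List.map_id A)
  have hsum := rank_add_rank hp (List.mem_append_left B hy)
  simp only [Function.comp_apply, id]
  rcases List.mem_cons.mp (hA.subset hy) with rfl | hy₀
  · rw [rank_of_forall_le (le_of_perm_cons_of_forall_lt hA hv)] at hsum ⊢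
    split_ifs <;> omega
  · have hr := rank_le_length A₀ y
    rw [rank_of_forall_lt (hsep y hy₀)] at hsum
    rw [rank_perm hA, rank_cons] at hsum ⊢
    simp only [if_neg (hv y hy₀).not_ge] at hsum ⊢
    split_ifs <;> omega

theorem shift3_stand_right {A A₀ B : List ℕ} {v N : ℕ} (hA : A ~ v :: A₀)
    (hp : A ++ B ~ List.range' 1 N) (hv : ∀ y ∈ A₀, y < v)
    (hsep : ∀ y ∈ A₀, ∀ z ∈ B, y < z) :
    shift3 (A.length - 1) (v - A.length + 1) A.length (stand B) = B := by
  have hk : A.length = A₀.length + 1 := by simp [hA.length_eq]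
  have hvB : v ∉ B := fun hvB => (List.nodup_append.mp (hp.nodup_iff.mpr List.nodup_range')).2.2
    v (hA.symm.subset List.mem_cons_self) v hvB rfl
  rw [shift3, stand_eq_map_rank, List.map_map]
  refine (List.map_congr_left fun z hz => ?_).trans (List.map_id B)
  have hsum := rank_add_rank hp (List.mem_append_right A hz)
  have hvsum := rank_add_rank hp (List.mem_append_left B (hA.symm.subset List.mem_cons_self))
  rw [rank_of_forall_le (le_of_perm_cons_of_forall_lt hA hv)] at hvsum
  rw [rank_perm hA, rank_cons, rank_of_forall_le fun y hy => (hsep y hy z hz).le] at hsum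
  have hzv : z ≠ v := fun h => hvB (h ▸ hz)
  simp only [Function.comp_apply, id]
  split_ifs at hsum ⊢ <;> omega

theorem pred_mem_of_perm_cons {A A₀ B : List ℕ} {v N z : ℕ} (hA : A ~ v :: A₀)
    (hp : A ++ B ~ List.range' 1 N) (hsep : ∀ y ∈ A₀, ∀ z ∈ B, y < z) (hz : z ∈ B)
    (hzv : z < v) : v - 1 ∈ B := by
  have hzN := List.mem_range'_1.mp (hp.subset (List.mem_append_right A hz))
  have hvN := List.mem_range'_1.mp
    (hp.subset (List.mem_append_left B (hA.symm.subset List.mem_cons_self)))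
  have hw : v - 1 ∈ A ++ B := hp.symm.subset (List.mem_range'_1.mpr (by omega))
  rcases List.mem_append.mp hw with hw | hw
  · rcases List.mem_cons.mp (hA.subset hw) with h | hw
    · omega
    · have := hsep _ hw z hz
      omega
  · exact hw

theorem shift3_strictMono {k₁ k₂ : ℕ} (m : ℕ) (hk : k₁ ≤ k₂) :
    StrictMono fun a => if a < m then a + k₁ else a + k₂ := fun a b hab => by
  dsimp only
  split_ifs <;> omega

theorem pred_mem_lrMaxima_S {A B : List ℕ} {v : ℕ} (hvA : v ∈ A) (hvB : v ∉ B) (hB : B.Nodup)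
    (hw : v - 1 ∈ B) (h231 : ∀ a b c, a < b → b < c → ¬ [b, c, a] <+ S A ++ S B) :
    v - 1 ∈ lrMaxima (S B) := by
  refine mem_lrMaxima_of_forall_lt (S_mem.mpr hw) fun u hu => ?_
  have huB : u ∈ B := S_mem.mp (hu.subset List.mem_cons_self)
  have hne : u ≠ v - 1 := by
    rintro rfl
    exact List.nodup_iff_sublist.mp ((S_perm B).nodup_iff.mpr hB) _ hu
  have huv : u ≠ v := fun h => hvB (h ▸ huB)
  have hv : v - 1 ≠ v := fun h => hvB (h ▸ hw)
  by_contra hlt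
  exact h231 (v - 1) v u (by omega) (by omega)
    ((List.singleton_sublist.mpr (S_mem.mpr hvA)).append hu)

theorem le_of_no231_S_append_cons {L R B : List ℕ} {v : ℕ} (hlt : ∀ y ∈ L ++ R, y < v)
    (h231 : ∀ a b c, a < b → b < c → ¬ [b, c, a] <+ S (L ++ v :: R) ++ S B) :
    ∀ y ∈ L ++ R, ∀ z ∈ B, y ≤ z := by
  intro y hy z hz
  by_contra hzy
  refine h231 z y v (not_le.mp hzy) (hlt y hy) ?_
  rw [S_append_cons hlt]
  have hyS : y ∈ S L ++ S R := by simpa [S_mem] using hy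
  exact ((List.singleton_sublist.mpr hyS).append (List.Sublist.refl [v])).append
    (List.singleton_sublist.mpr (S_mem.mpr hz))

theorem exists_C2_stand_eq {A B : List ℕ}
    (hp : A ++ B ~ List.range' 1 (A.length + B.length))
    (h231 : ∀ a b c, a < b → b < c → ¬ [b, c, a] <+ S A ++ S B)
    (hAB : ¬ ∀ y ∈ A, ∀ z ∈ B, y < z) :
    ∃ i, 1 ≤ i ∧ i ≤ slmax (stand B) ∧
      C2 (stand A) (stand B) i = A ++ (A.length + B.length + 1) :: B := by
  obtain ⟨hAnd, hBnd, hdisj⟩ := List.nodup_append.mp (hp.nodup_iff.mpr List.nodup_range')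
  push Not at hAB
  obtain ⟨y₀, hy₀, z₀, hz₀, hzy₀⟩ := hAB
  obtain ⟨v, hv⟩ : ∃ v, A.max? = some v :=
    Option.ne_none_iff_exists'.mp (by simpa [List.max?_eq_none_iff] using List.ne_nil_of_mem hy₀)
  obtain ⟨hvA, hvmax⟩ := List.max?_eq_some_iff.mp hv
  obtain ⟨L, R, hLR, hlt⟩ := exists_eq_append_cons_of_forall_le hAnd hvA hvmax
  have hA : A ~ v :: (L ++ R) := hLR ▸ List.perm_middle
  have hsep : ∀ y ∈ L ++ R, ∀ z ∈ B, y < z := fun y hy z hz =>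
    lt_of_le_of_ne (le_of_no231_S_append_cons hlt (hLR ▸ h231) y hy z hz)
      (hdisj y (hA.symm.subset (List.mem_cons_of_mem v hy)) z hz)
  have hwB : v - 1 ∈ B := pred_mem_of_perm_cons hA hp hsep hz₀
    (lt_of_le_of_ne (hzy₀.trans (hvmax y₀ hy₀)) fun h => hdisj v hvA z₀ hz₀ h.symm)
  have hright := shift3_stand_right hA hp hlt hsep
  have hlr := pred_mem_lrMaxima_S hvA (fun h => hdisj v hvA v h rfl) hBnd hwB h231
  rw [← hright, shift3, S_map (shift3_strictMono _ (Nat.sub_le _ 1)),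
    lrMaxima_map (shift3_strictMono _ (Nat.sub_le _ 1)), List.mem_map] at hlr
  obtain ⟨b, hb, hfb⟩ := hlr
  have hk : 1 ≤ A.length := List.length_pos_of_mem hvA
  have hbv : b = v - A.length := by split_ifs at hfb <;> omega
  obtain ⟨i, hi1, hi2, hi⟩ := exists_lrm_eq (hbv ▸ hb)
  refine ⟨i, hi1, hi2, ?_⟩
  rw [C2, hi, stand_length, stand_length, shift3_stand_left hA hp hlt hsep, hright]

theorem Is2SS.exists_eq_append_cons {π : List ℕ} (h : Is2SS π) (hne : π ≠ []) :
    ∃ A B, π = A ++ (A.length + B.length + 1) :: B ∧ D π = (stand A, stand B) ∧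
      A ++ B ~ List.range' 1 (A.length + B.length) ∧
      ∀ a b c, a < b → b < c → ¬ [b, c, a] <+ S A ++ S B := by
  obtain ⟨hperm, hSS⟩ := h
  unfold IsPermOf idPerm at hperm
  unfold idPerm at hSS
  have hpos := List.length_pos_iff.mpr hne
  generalize hn : π.length = n at hperm hSS hpos
  have hle : ∀ y ∈ π, y ≤ n := fun y hy => by
    have := List.mem_range'_1.mp (hperm.subset hy)
    omega
  obtain ⟨A, B, rfl, hlt⟩ := exists_eq_append_cons_of_forall_le (hperm.nodup_iff.mpr
    List.nodup_range') (hperm.symm.subset (List.mem_range'_1.mpr ⟨hpos, by omega⟩)) hle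
  have hlen : n = A.length + B.length + 1 := by
    simp at hn
    omega
  subst hlen
  refine ⟨A, B, rfl, D_append_cons hlt, ?_, fun a b c hab hbc hsub => ?_⟩
  · refine (List.perm_middle.symm.trans (hperm.trans ?_)).cons_inv
    rw [List.range'_concat]
    simp [Nat.add_comm]
  · have hba := pair_sublist_S_of_231
      (hsub.trans (List.sublist_append_left _ [A.length + B.length + 1])) hab hbc
    rw [← S_append_cons hlt, hSS] at hba
    have := List.pairwise_pair.mp ((List.pairwise_lt_range' (s := 1)).sublist hba)
    omega

/-- If `π` is a two-stack sortable permutation with `D(π) = (π1, π2)`, then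
either `π = C1(π1, π2)`, or `π = C2(π1, π2, i)` for some `1 ≤ i ≤ slmax(π2)`. -/
theorem D_inverse (π : List ℕ) (hne : π ≠ []) (h : Is2SS π)
    (π1 π2 : List ℕ) (hD : D π = (π1, π2)) :
    π = C1 π1 π2 ∨ ∃ i, 1 ≤ i ∧ i ≤ slmax π2 ∧ π = C2 π1 π2 i := by
  obtain ⟨A, B, rfl, hDAB, hp, h231⟩ := h.exists_eq_append_cons hne
  obtain ⟨rfl, rfl⟩ := Prod.ext_iff.mp (hDAB.symm.trans hD)
  by_cases hAB : ∀ y ∈ A, ∀ z ∈ B, y < z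
  · exact Or.inl (C1_stand_eq_of_forall_lt hp hAB).symm
  · obtain ⟨i, hi₁, hi₂, hi⟩ := exists_C2_stand_eq hp h231 hAB
    exact Or.inr ⟨i, hi₁, hi₂, hi.symm⟩

end TSP
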